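/- A claw-induced-saturated graph has no vertex of degree one. -/

import Mathlib

/-!
Let `v` have the single neighbour `u`. Deleting the edge `uv` must create an induced claw. In
`G - uv` the vertex `v` is isolated, while every vertex of the claw has a neighbour, so that claw
avoids `v`; but on vertex sets avoiding `v` the graphs `G - uv` and `G` agree, so the claw is
already induced in `G`, a contradiction.
-/

open SimpleGraph

/-- `G` contains an induced copy of `H`. -/
def HasInducedCopy {W V : Type*} (H : SimpleGraph W) (G : SimpleGraph V) : Prop :=
  Nonempty (H ↪g G)

/-- `G` is `H`-induced-saturated: `G` has no induced copy of `H`, but deleting any edge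
or adding any non-edge creates an induced copy of `H`. -/
def IsIndSat {V W : Type*} (G : SimpleGraph V) (H : SimpleGraph W) : Prop :=
  ¬ HasInducedCopy H G ∧
  (∀ u v : V, G.Adj u v → HasInducedCopy H (G.deleteEdges {s(u, v)})) ∧
  (∀ u v : V, u ≠ v → ¬ G.Adj u v →
    HasInducedCopy H (G ⊔ SimpleGraph.fromEdgeSet {s(u, v)}))

/-- The claw `K_{1,3}`: star with center `0` and leaves `1, 2, 3`. -/
def claw : SimpleGraph (Fin 4) :=
  SimpleGraph.fromRel (fun i _ => i = 0)

lemma SimpleGraph.deleteEdges_adj_iff_of_ne_right {V : Type*} (G : SimpleGraph V) {u v x y : V}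
    (hx : x ≠ v) (hy : y ≠ v) : (G.deleteEdges {s(u, v)}).Adj x y ↔ G.Adj x y := by
  rw [deleteEdges_adj, Set.mem_singleton_iff, Sym2.eq_iff]
  exact ⟨And.left, fun hxy => ⟨hxy, by rintro (⟨-, rfl⟩ | ⟨rfl, -⟩) <;> contradiction⟩⟩

lemma claw_exists_adj (i : Fin 4) : ∃ j, claw.Adj i j := by
  by_cases hi : i = 0
  · exact ⟨1, by simp [claw, hi]⟩
  · exact ⟨0, by simp [claw, hi]⟩

lemma hasInducedCopy_of_deleteEdges_pendant {V W : Type*} {G : SimpleGraph V}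
    {H : SimpleGraph W} (hH : ∀ w, ∃ w', H.Adj w w') {u v : V} (hv : ∀ x, G.Adj v x → x = u)
    (hcopy : HasInducedCopy H (G.deleteEdges {s(u, v)})) : HasInducedCopy H G := by
  obtain ⟨f⟩ := hcopy
  have hf_ne : ∀ w, f w ≠ v := by
    intro w hw
    obtain ⟨w', hww'⟩ := hH w
    have hadj := f.map_adj_iff.2 hww'
    rw [hw, deleteEdges_adj] at hadj
    exact hadj.2 (by rw [hv _ hadj.1, Set.mem_singleton_iff, Sym2.eq_swap])
  exact ⟨⟨f.toEmbedding, fun {a b} =>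
    ((G.deleteEdges_adj_iff_of_ne_right (hf_ne a) (hf_ne b)).symm.trans f.map_adj_iff)⟩⟩

/-- A claw-induced-saturated graph has no vertex of degree one. -/
theorem claw_indSat_no_degree_one {V : Type*} [Fintype V] (G : SimpleGraph V)
    [DecidableRel G.Adj] (h : IsIndSat G claw) :
    ∀ v : V, G.degree v ≠ 1 := by
  intro v hdeg
  obtain ⟨u, hu⟩ := Finset.card_eq_one.1 hdeg
  have hv : ∀ x, G.Adj v x → x = u := fun x hx =>
    Finset.mem_singleton.1 (hu ▸ (G.mem_neighborFinset v x).2 hx)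
  have hvu : G.Adj v u := (G.mem_neighborFinset v u).1 (hu ▸ Finset.mem_singleton_self u)
  exact h.1 (hasInducedCopy_of_deleteEdges_pendant claw_exists_adj hv (h.2.1 u v hvu.symm))
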